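/- arXiv:2212.12788 — 7 statements merged into one kernel-verified Lean document; each statement's English description precedes it below -/
import Mathlib

section
/- The map F : S → 𝒜, F(t) = exp(−t)·c·exp(t), is Fréchet differentiable at every t ∈ S, and its Fréchet derivative DF(t) : S → 𝒜 is the continuous linear map s ↦ exp(−t)·(c·s − s·c)·exp(t). -/
/-!
Every `u ∈ S` commutes with `t`, so `exp u = exp t * exp (u - t)` and the derivative of `u ↦ exp u`
at `t` along `S` is `s ↦ exp t * s`, exactly as in a commutative algebra. The product rule then
gives the derivative of `exp (-u) * c * exp u`, and `s * exp t = exp t * s` puts it in the form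
`exp (-t) * (c * s - s * c) * exp t`.
-/

open NormedSpace ContinuousLinearMap

section
variable {𝕂 𝔸 E : Type*} [RCLike 𝕂] [NormedRing 𝔸] [NormedAlgebra 𝕂 𝔸] [CompleteSpace 𝔸]
  [NormedAddCommGroup E] [NormedSpace 𝕂 E]

theorem hasFDerivAt_exp_comp_of_commute (ι : E →L[𝕂] 𝔸) {t : E}
    (hcomm : ∀ u, Commute (ι t) (ι u)) :
    HasFDerivAt (fun u => exp (ι u)) (exp (ι t) • ι) t := by
  let _ : NormedAlgebra ℚ 𝔸 := NormedAlgebra.restrictScalars ℚ 𝕂 𝔸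
  have hshift : (fun u => exp (ι u)) = fun u => exp (ι t) * exp (ι (u - t)) := by
    funext u
    rw [← exp_add_of_commute (by simpa using (hcomm u).sub_right (Commute.refl _)), map_sub,
      add_sub_cancel]
  have hexp : HasFDerivAt exp (1 : 𝔸 →L[𝕂] 𝔸) (ι (t - t)) := by
    simpa using hasFDerivAt_exp_zero (𝕂 := 𝕂) (𝔸 := 𝔸)
  rw [hshift]
  simpa [one_def] using
    (hexp.comp t (ι.hasFDerivAt.comp t ((hasFDerivAt_id t).sub_const t))).const_mul (exp (ι t))

theorem hasFDerivAt_exp_neg_mul_mul_exp (ι : E →L[𝕂] 𝔸) (c : 𝔸) {t : E}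
    (hcomm : ∀ u, Commute (ι t) (ι u)) :
    HasFDerivAt (fun u => exp (-ι u) * c * exp (ι u))
      ((mulLeftRight 𝕂 𝔸 (exp (-ι t)) (exp (ι t))).comp ((mul 𝕂 𝔸 c - (mul 𝕂 𝔸).flip c).comp ι))
      t := by
  have hexp := hasFDerivAt_exp_comp_of_commute ι hcomm
  have hexp_neg := hasFDerivAt_exp_comp_of_commute (-ι) fun u => by
    simpa using (hcomm u).neg_left.neg_right
  refine ((hexp_neg.mul_const' c).mul' hexp).congr_fderiv (ContinuousLinearMap.ext fun s => ?_)
  have hs : Commute (ι s) (exp (ι t)) := (hcomm s).symm.exp_right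
  simp only [neg_apply, add_apply, smul_apply, comp_apply, mulLeftRight_apply, sub_apply,
    mul_apply', flip_apply, smul_eq_mul, MulOpposite.smul_eq_mul_unop, MulOpposite.unop_op]
  rw [mul_assoc _ c, ← hs.eq]
  noncomm_ring

end

theorem cc_function_frechet_derivative_general
    {𝒜 : Type*} [NormedRing 𝒜] [NormedAlgebra ℂ 𝒜] [CompleteSpace 𝒜]
    (S : Submodule ℂ 𝒜)
    (hScomm : ∀ x y : S, (x : 𝒜) * (y : 𝒜) = (y : 𝒜) * (x : 𝒜)) (c : 𝒜) (t : S) :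
    ∃ D : S →L[ℂ] 𝒜,
      (∀ s : S, D s =
        NormedSpace.exp (-(t : 𝒜)) * (c * (s : 𝒜) - (s : 𝒜) * c) * NormedSpace.exp (t : 𝒜)) ∧
      HasFDerivAt
        (fun u : S => NormedSpace.exp (-(u : 𝒜)) * c * NormedSpace.exp (u : 𝒜)) D t :=
  ⟨_, fun s => by simp [mul_sub, sub_mul], hasFDerivAt_exp_neg_mul_mul_exp S.subtypeL c fun u => hScomm t u⟩

/-- Let `𝒜` be a complex unital Banach algebra, `S ⊆ 𝒜` a closed linear
subspace whose elements pairwise commute, and `c ∈ 𝒜`.  The map `F : S → 𝒜`,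
`F(t) = exp(−t)·c·exp(t)`, is Fréchet differentiable at every `t ∈ S`, and its Fréchet
derivative `DF(t) : S → 𝒜` is the continuous linear map `s ↦ exp(−t)·(c·s − s·c)·exp(t)`. -/
theorem cc_function_frechet_derivative
    {𝒜 : Type*} [NormedRing 𝒜] [NormedAlgebra ℂ 𝒜] [CompleteSpace 𝒜]
    (S : Submodule ℂ 𝒜) (hSclosed : IsClosed (S : Set 𝒜))
    (hScomm : ∀ x y : S, (x : 𝒜) * (y : 𝒜) = (y : 𝒜) * (x : 𝒜)) (c : 𝒜) (t : S) :
    ∃ D : S →L[ℂ] 𝒜,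
      (∀ s : S, D s =
        NormedSpace.exp (-(t : 𝒜)) * (c * (s : 𝒜) - (s : 𝒜) * c) * NormedSpace.exp (t : 𝒜)) ∧
      HasFDerivAt
        (fun u : S => NormedSpace.exp (-(u : 𝒜)) * c * NormedSpace.exp (u : 𝒜)) D t :=
  cc_function_frechet_derivative_general S hScomm c t
end

section
/- Assume Hψ* = E·ψ* and that the kernel of H − E·I is contained in the complex span of ψ* (i.e. every x with Hx = E·x is a scalar multiple of ψ*). Then A is injective on W: if φ ∈ W satisfies Q(B⁻¹((H − E)(Bφ))) = 0, then φ = 0. -/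
/-!
Put `T := H - E` and `x := Bφ`. If `Q(B⁻¹Tx) = 0` then `B⁻¹Tx ∈ ℂψ₀`, i.e. `Tx ∈ ℂψ*`. Since `T`
is self-adjoint and `Tψ* = 0`, the range of `T` is orthogonal to `ψ*`, so `Tx = 0`. By the
kernel assumption `x ∈ ℂψ*`, i.e. `φ ∈ ℂψ₀`; as also `φ ⊥ ψ₀`, `φ = 0`.
-/

theorem LinearEquiv.apply_mem_span_singleton_iff {R M N : Type*} [Semiring R] [AddCommMonoid M]
    [AddCommMonoid N] [Module R M] [Module R N] (e : M ≃ₗ[R] N) {x v : M} :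
    e x ∈ R ∙ e v ↔ x ∈ R ∙ v := by
  simp only [Submodule.mem_span_singleton, ← map_smul, e.injective.eq_iff]

section InnerProductSpace

variable {𝕜 E : Type*} [RCLike 𝕜] [NormedAddCommGroup E] [InnerProductSpace 𝕜 E]

theorem Submodule.eq_zero_of_mem_of_mem_orthogonal {K : Submodule 𝕜 E} {x : E} (hx : x ∈ K)
    (hx' : x ∈ Kᗮ) : x = 0 :=
  Submodule.disjoint_def.mp K.orthogonal_disjoint x hx hx'

theorem LinearMap.IsSymmetric.apply_eq_zero_of_apply_mem_span_singleton {T : E →ₗ[𝕜] E}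
    (hT : T.IsSymmetric) {v x : E} (hv : T v = 0) (hx : T x ∈ 𝕜 ∙ v) : T x = 0 := by
  refine Submodule.eq_zero_of_mem_of_mem_orthogonal hx ?_
  rw [Submodule.mem_orthogonal_singleton_iff_inner_right, ← hT v x, hv, inner_zero_left]

end InnerProductSpace

theorem cc_induced_operator_injective_general
    {𝓗 : Type*} [NormedAddCommGroup 𝓗] [InnerProductSpace ℂ 𝓗] [CompleteSpace 𝓗]
    (H : 𝓗 →L[ℂ] 𝓗) (hH : IsSelfAdjoint H) (E : ℝ)
    (B : 𝓗 ≃L[ℂ] 𝓗) (ψs : 𝓗)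
    (heig : H ψs = (E : ℂ) • ψs)
    (hker : ∀ x : 𝓗, H x = (E : ℂ) • x → ∃ z : ℂ, x = z • ψs) :
    let ψ0 : 𝓗 := B.symm ψs
    let W : Submodule ℂ 𝓗 := (ℂ ∙ ψ0)ᗮ
    let Q : 𝓗 →L[ℂ] W := W.orthogonalProjectionOnto
    ∀ φ : W,
      Q ((B.symm : 𝓗 →L[ℂ] 𝓗)
        ((H - (E : ℂ) • (1 : 𝓗 →L[ℂ] 𝓗)) ((B : 𝓗 →L[ℂ] 𝓗) (φ : 𝓗)))) = 0 → φ = 0 := by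
  intro ψ0 W Q φ hφ
  set T := H - (E : ℂ) • (1 : 𝓗 →L[ℂ] 𝓗)
  have hT : IsSelfAdjoint T := hH.sub (IsSelfAdjoint.smul (Complex.conj_ofReal E) (.one _))
  have hTψs : T ψs = 0 := by simp [T, heig]
  have hBinv : ∀ x, B.symm x ∈ ℂ ∙ ψ0 ↔ x ∈ ℂ ∙ ψs := fun x =>
    B.symm.toLinearEquiv.apply_mem_span_singleton_iff
  have hTx_span : T (B φ) ∈ ℂ ∙ ψs := by
    rw [Submodule.orthogonalProjectionOnto_eq_zero_iff, Submodule.orthogonal_orthogonal] at hφ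
    exact (hBinv _).mp hφ
  have hTx : T (B φ) = 0 :=
    hT.isSymmetric.apply_eq_zero_of_apply_mem_span_singleton hTψs hTx_span
  obtain ⟨z, hz⟩ := hker (B φ) (by simpa [T, sub_eq_zero] using hTx)
  have hφ_span : (φ : 𝓗) ∈ ℂ ∙ ψ0 := by
    simpa using (hBinv (B φ)).mpr (Submodule.mem_span_singleton.mpr ⟨z, hz.symm⟩)
  exact Subtype.ext (Submodule.eq_zero_of_mem_of_mem_orthogonal hφ_span φ.2)

/-- In a complex Hilbert space `𝓗`, with `H` bounded self-adjoint, `E ∈ ℝ`,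
`B` a continuous linear automorphism, `ψ* ≠ 0`, `ψ₀ := B⁻¹ψ*`, `W := {ψ₀}^⊥`, `Q` the
orthogonal projection onto `W`, and `Aφ := Q(B⁻¹((H − E)(Bφ)))`: assume `Hψ* = E·ψ*` and that
the kernel of `H − E·I` is contained in the complex span of `ψ*`.  Then `A` is injective on
`W`: if `φ ∈ W` satisfies `Q(B⁻¹((H − E)(Bφ))) = 0`, then `φ = 0`. -/
theorem cc_induced_operator_injective
    {𝓗 : Type*} [NormedAddCommGroup 𝓗] [InnerProductSpace ℂ 𝓗] [CompleteSpace 𝓗]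
    (H : 𝓗 →L[ℂ] 𝓗) (hH : IsSelfAdjoint H) (E : ℝ)
    (B : 𝓗 ≃L[ℂ] 𝓗) (ψs : 𝓗) (hψs : ψs ≠ 0)
    (heig : H ψs = (E : ℂ) • ψs)
    (hker : ∀ x : 𝓗, H x = (E : ℂ) • x → ∃ z : ℂ, x = z • ψs) :
    let ψ0 : 𝓗 := B.symm ψs
    let W : Submodule ℂ 𝓗 := (ℂ ∙ ψ0)ᗮ
    let Q : 𝓗 →L[ℂ] W := W.orthogonalProjectionOnto
    ∀ φ : W,
      Q ((B.symm : 𝓗 →L[ℂ] 𝓗)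
        ((H - (E : ℂ) • (1 : 𝓗 →L[ℂ] 𝓗)) ((B : 𝓗 →L[ℂ] 𝓗) (φ : 𝓗)))) = 0 → φ = 0 :=
  cc_induced_operator_injective_general H hH E B ψs heig hker
end

section
/- Assume Hψ* = E·ψ* and the spectral-gap condition: there is Λ > 0 such that ‖(H − E)φ‖ ≥ Λ‖φ‖ for every φ ∈ 𝐇 orthogonal to ψ*. Then the operator A‡ : W → W, A‡χ := Q(B*((H − E)((B*)⁻¹χ))), is bounded below: for every χ ∈ W one has Λ·‖χ‖ ≤ ‖B*‖ · ‖Q∘B⁻¹‖ · ‖A‡χ‖, where ‖B*‖ and ‖Q∘B⁻¹‖ denote operator norms on 𝐇. -/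
open scoped InnerProductSpace
open ContinuousLinearMap

/-!
Put `φ := (B⁻¹)* χ`, so that `B* φ = χ` and `φ ⊥ ψ*`; the gap gives `Λ‖χ‖ ≤ ‖B*‖‖y‖` with
`y := (H - E) φ`. Since `H - E` is self-adjoint and kills `ψ*`, also `y ⊥ ψ*`, i.e. `B* y ∈ W`,
so `A‡ χ = B* y`. Finally `‖y‖² = ⟪B* y, B⁻¹ y⟫ = ⟪B* y, Q B⁻¹ y⟫ ≤ ‖A‡ χ‖ ‖Q ∘ B⁻¹‖ ‖y‖`.
-/

section

variable {𝕜 E F : Type*} [RCLike 𝕜] [NormedAddCommGroup E] [InnerProductSpace 𝕜 E]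
  [CompleteSpace E] [NormedAddCommGroup F] [InnerProductSpace 𝕜 F] [CompleteSpace F]

theorem IsSelfAdjoint.inner_apply_eq_zero_of_apply_eq_zero {T : E →L[𝕜] E} (hT : IsSelfAdjoint T)
    {ψ : E} (hψ : T ψ = 0) (φ : E) : ⟪ψ, T φ⟫_𝕜 = 0 := by
  rw [← hT.adjoint_eq, adjoint_inner_right, hψ, inner_zero_left]

namespace ContinuousLinearEquiv

theorem adjoint_apply_adjoint_symm_apply (B : E ≃L[𝕜] F) (x : E) :
    adjoint (B : E →L[𝕜] F) (adjoint (B.symm : F →L[𝕜] E) x) = x := by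
  rw [← comp_apply, ← adjoint_comp, B.coe_symm_comp_coe, adjoint_id, id_apply]

theorem norm_le_norm_orthogonalProjectionOnto_comp_symm_mul (B : E ≃L[𝕜] F)
    (K : Submodule 𝕜 E) [K.HasOrthogonalProjection] {y : F}
    (hy : adjoint (B : E →L[𝕜] F) y ∈ K) :
    ‖y‖ ≤ ‖K.orthogonalProjectionOnto ∘L (B.symm : F →L[𝕜] E)‖ * ‖adjoint (B : E →L[𝕜] F) y‖ := by
  set P := K.orthogonalProjectionOnto ∘L (B.symm : F →L[𝕜] E)
  set u : K := ⟨adjoint (B : E →L[𝕜] F) y, hy⟩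
  have hsq_le : ‖y‖ ^ 2 ≤ ‖P‖ * ‖u‖ * ‖y‖ :=
    calc ‖y‖ ^ 2 = ‖⟪u, P y⟫_𝕜‖ := by
          rw [comp_apply, Submodule.inner_orthogonalProjectionOnto_eq_of_mem_left,
            adjoint_inner_left, coe_coe, coe_coe, apply_symm_apply, inner_self_eq_norm_sq_to_K]
          simp
      _ ≤ ‖u‖ * ‖P y‖ := norm_inner_le_norm _ _
      _ ≤ ‖u‖ * (‖P‖ * ‖y‖) := by gcongr; exact P.le_opNorm y
      _ = ‖P‖ * ‖u‖ * ‖y‖ := by ring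
  rcases (norm_nonneg y).eq_or_lt with hy0 | hy0
  · rw [← hy0]; positivity
  · exact le_of_mul_le_mul_right (by rwa [← sq]) hy0

end ContinuousLinearEquiv

end

theorem cc_adjoint_operator_bounded_below_general
    {𝓗 : Type*} [NormedAddCommGroup 𝓗] [InnerProductSpace ℂ 𝓗] [CompleteSpace 𝓗]
    (H : 𝓗 →L[ℂ] 𝓗) (hH : IsSelfAdjoint H) (E : ℝ)
    (B : 𝓗 ≃L[ℂ] 𝓗) (ψs : 𝓗)
    (heig : H ψs = (E : ℂ) • ψs)
    (Λ : ℝ) (hΛ : 0 < Λ)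
    (hgap : ∀ φ : 𝓗, ⟪ψs, φ⟫_ℂ = 0 →
      Λ * ‖φ‖ ≤ ‖(H - (E : ℂ) • (1 : 𝓗 →L[ℂ] 𝓗)) φ‖) :
    let ψ0 : 𝓗 := B.symm ψs
    let W : Submodule ℂ 𝓗 := (ℂ ∙ ψ0)ᗮ
    let Q : 𝓗 →L[ℂ] W := W.orthogonalProjectionOnto
    let Aadj : W →L[ℂ] W :=
      Q ∘L ((ContinuousLinearMap.adjoint (B : 𝓗 →L[ℂ] 𝓗)) ∘L
        ((H - (E : ℂ) • (1 : 𝓗 →L[ℂ] 𝓗)) ∘L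
          ((ContinuousLinearMap.adjoint (B.symm : 𝓗 →L[ℂ] 𝓗)) ∘L W.subtypeL)))
    ∀ χ : W,
      Λ * ‖χ‖ ≤
        ‖ContinuousLinearMap.adjoint (B : 𝓗 →L[ℂ] 𝓗)‖ *
          ‖Q ∘L (B.symm : 𝓗 →L[ℂ] 𝓗)‖ * ‖Aadj χ‖ := by
  intro ψ0 W Q Aadj χ
  set L := H - (E : ℂ) • (1 : 𝓗 →L[ℂ] 𝓗)
  set φ := adjoint (B.symm : 𝓗 →L[ℂ] 𝓗) χ
  have hL : IsSelfAdjoint L := hH.sub (IsSelfAdjoint.smul (Complex.conj_ofReal E) (.one _))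
  have hLψs : L ψs = 0 := by simp [L, heig]
  have hφ : ⟪ψs, φ⟫_ℂ = 0 := by
    rw [adjoint_inner_right]
    exact Submodule.mem_orthogonal_singleton_iff_inner_right.mp χ.2
  have hBLφ : adjoint (B : 𝓗 →L[ℂ] 𝓗) (L φ) ∈ W := by
    rw [Submodule.mem_orthogonal_singleton_iff_inner_right, adjoint_inner_right]
    simpa [ψ0] using hL.inner_apply_eq_zero_of_apply_eq_zero hLψs φ
  have hAadj : ‖Aadj χ‖ = ‖adjoint (B : 𝓗 →L[ℂ] 𝓗) (L φ)‖ :=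
    congrArg norm (W.orthogonalProjectionOnto_mem_subspace_eq_self ⟨_, hBLφ⟩)
  calc Λ * ‖χ‖ = Λ * ‖adjoint (B : 𝓗 →L[ℂ] 𝓗) φ‖ := by
        rw [B.adjoint_apply_adjoint_symm_apply]; rfl
    _ ≤ ‖adjoint (B : 𝓗 →L[ℂ] 𝓗)‖ * (Λ * ‖φ‖) := by
        rw [mul_left_comm]; gcongr; exact le_opNorm _ _
    _ ≤ ‖adjoint (B : 𝓗 →L[ℂ] 𝓗)‖ * ‖L φ‖ := by gcongr; exact hgap φ hφ
    _ ≤ ‖adjoint (B : 𝓗 →L[ℂ] 𝓗)‖ * ‖Q ∘L (B.symm : 𝓗 →L[ℂ] 𝓗)‖ * ‖Aadj χ‖ := by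
        rw [mul_assoc, hAadj]
        gcongr
        exact B.norm_le_norm_orthogonalProjectionOnto_comp_symm_mul W hBLφ

/-- In a complex Hilbert space `𝓗`, with `H` bounded self-adjoint, `E ∈ ℝ`,
`B` a continuous linear automorphism with adjoint `B*`, `ψ* ≠ 0`, `ψ₀ := B⁻¹ψ*`,
`W := {ψ₀}^⊥`, `Q` the orthogonal projection onto `W`: assume `Hψ* = E·ψ*` and the
spectral-gap condition `‖(H − E)φ‖ ≥ Λ‖φ‖` (with `Λ > 0`) for every `φ ⊥ ψ*`.  Then the
operator `A‡ : W → W`, `A‡χ := Q(B*((H − E)((B*)⁻¹χ)))`, is bounded below: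
`Λ·‖χ‖ ≤ ‖B*‖·‖Q∘B⁻¹‖·‖A‡χ‖` for every `χ ∈ W`. -/
theorem cc_adjoint_operator_bounded_below
    {𝓗 : Type*} [NormedAddCommGroup 𝓗] [InnerProductSpace ℂ 𝓗] [CompleteSpace 𝓗]
    (H : 𝓗 →L[ℂ] 𝓗) (hH : IsSelfAdjoint H) (E : ℝ)
    (B : 𝓗 ≃L[ℂ] 𝓗) (ψs : 𝓗) (hψs : ψs ≠ 0)
    (heig : H ψs = (E : ℂ) • ψs)
    (Λ : ℝ) (hΛ : 0 < Λ)
    (hgap : ∀ φ : 𝓗, ⟪ψs, φ⟫_ℂ = 0 →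
      Λ * ‖φ‖ ≤ ‖(H - (E : ℂ) • (1 : 𝓗 →L[ℂ] 𝓗)) φ‖) :
    let ψ0 : 𝓗 := B.symm ψs
    let W : Submodule ℂ 𝓗 := (ℂ ∙ ψ0)ᗮ
    let Q : 𝓗 →L[ℂ] W := W.orthogonalProjectionOnto
    let Aadj : W →L[ℂ] W :=
      Q ∘L ((ContinuousLinearMap.adjoint (B : 𝓗 →L[ℂ] 𝓗)) ∘L
        ((H - (E : ℂ) • (1 : 𝓗 →L[ℂ] 𝓗)) ∘L
          ((ContinuousLinearMap.adjoint (B.symm : 𝓗 →L[ℂ] 𝓗)) ∘L W.subtypeL)))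
    ∀ χ : W,
      Λ * ‖χ‖ ≤
        ‖ContinuousLinearMap.adjoint (B : 𝓗 →L[ℂ] 𝓗)‖ *
          ‖Q ∘L (B.symm : 𝓗 →L[ℂ] 𝓗)‖ * ‖Aadj χ‖ :=
  cc_adjoint_operator_bounded_below_general H hH E B ψs heig Λ hΛ hgap
end

section
/- Assume Hψ* = E·ψ* and the spectral-gap condition: there is Λ > 0 such that ‖(H − E)φ‖ ≥ Λ‖φ‖ for every φ ∈ 𝐇 orthogonal to ψ*. Then A : W → W is bijective, and for every φ ∈ W one has Λ·‖φ‖ ≤ ‖B*‖ · ‖Q∘B⁻¹‖ · ‖Aφ‖; in particular A is a continuous linear isomorphism of W whose inverse has operator norm at most ‖B*‖·‖Q∘B⁻¹‖/Λ. -/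
/-!
Write `K = H − E`, a self-adjoint operator with `K ψ* = 0` and hence `range K ⊥ ψ*`.
For `φ ∈ W`, replacing `Bφ` by its component `w` orthogonal to `ψ*` changes neither `K(Bφ)` nor
`Q B⁻¹(Bφ) = φ`, so the gap gives `Λ‖φ‖ ≤ ‖Q B⁻¹‖ ‖K B φ‖`. Since `B⁻¹ v − Q B⁻¹ v ∈ ℂ ψ₀`,
every `v` splits as `B(Q B⁻¹ v) + c ψ*`; for `v = K B φ ⊥ ψ*` this gives
`‖v‖² = ⟪B* v, Aφ⟫`, i.e. `‖K B φ‖ ≤ ‖B*‖ ‖Aφ‖`.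
A bounded-below operator has closed range, so it remains to see `(range A)ᗮ = 0`: if `y ∈ W` is
orthogonal to the range, then `χ = (B⁻¹)* y` satisfies `K χ ⊥ B(W) + ℂ ψ* = 𝓗` and `χ ⊥ ψ*`,
so the gap forces `χ = 0`.
-/

open scoped InnerProductSpace
open ContinuousLinearMap

namespace ContinuousLinearMap

variable {𝕜 E F : Type*} [RCLike 𝕜] [NormedAddCommGroup E] [InnerProductSpace 𝕜 E]
  [NormedAddCommGroup F] [InnerProductSpace 𝕜 F] [CompleteSpace E] [CompleteSpace F]

theorem bijective_of_bounded_below_of_orthogonal_range (f : E →L[𝕜] F) {C : ℝ}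
    (hbound : ∀ x, ‖x‖ ≤ C * ‖f x‖) (horth : ∀ y, (∀ x, ⟪f x, y⟫_𝕜 = 0) → y = 0) :
    Function.Bijective f := by
  rw [bijective_iff_dense_range_and_antilipschitz]
  refine ⟨?_, _, f.antilipschitz_of_bound (K := C.toNNReal) fun x ↦ ?_⟩
  · rw [Submodule.topologicalClosure_eq_top_iff, Submodule.eq_bot_iff]
    rintro y hy
    exact horth y fun x ↦ hy (f x) ⟨x, rfl⟩
  · exact (hbound x).trans (by gcongr; exact C.le_coe_toNNReal)

theorem exists_continuousLinearEquiv_of_bounded_below_of_orthogonal_range (f : E →L[𝕜] F)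
    {C : ℝ} (hC : 0 ≤ C)
    (hbound : ∀ x, ‖x‖ ≤ C * ‖f x‖) (horth : ∀ y, (∀ x, ⟪f x, y⟫_𝕜 = 0) → y = 0) :
    ∃ e : E ≃L[𝕜] F, (∀ x, e x = f x) ∧ ‖(e.symm : F →L[𝕜] E)‖ ≤ C := by
  obtain ⟨hinj, hsurj⟩ := f.bijective_of_bounded_below_of_orthogonal_range hbound horth
  let e := ContinuousLinearEquiv.ofBijective f (LinearMap.ker_eq_bot.mpr hinj)
    (LinearMap.range_eq_top.mpr hsurj)
  refine ⟨e, fun _ ↦ rfl, opNorm_le_bound _ hC fun y ↦ ?_⟩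
  simpa [e] using hbound (e.symm y)

end ContinuousLinearMap

theorem map_starProjection_orthogonal_singleton {𝕜 𝓗 F : Type*} [RCLike 𝕜]
    [NormedAddCommGroup 𝓗] [InnerProductSpace 𝕜 𝓗] {ψ : 𝓗} [NormedAddCommGroup F]
    [NormedSpace 𝕜 F] (f : 𝓗 →L[𝕜] F) (hf : f ψ = 0) (x : 𝓗) :
    f ((𝕜 ∙ ψ)ᗮ.starProjection x) = f x := by
  obtain ⟨c, hc⟩ := Submodule.mem_span_singleton.mp ((𝕜 ∙ ψ).starProjection_apply_mem x)
  rw [Submodule.starProjection_orthogonal_val, map_sub, ← hc, map_smul, hf, smul_zero, sub_zero]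

section

variable {𝕜 𝓗 : Type*} [RCLike 𝕜] [NormedAddCommGroup 𝓗] [InnerProductSpace 𝕜 𝓗]
  (B : 𝓗 ≃L[𝕜] 𝓗) (ψ : 𝓗)

theorem exists_eq_map_orthogonalProjectionOnto_symm_add_smul (y : 𝓗) :
    ∃ c : 𝕜, y = B ((𝕜 ∙ B.symm ψ)ᗮ.orthogonalProjectionOnto (B.symm y)) + c • ψ := by
  obtain ⟨c, hc⟩ := Submodule.mem_span_singleton.mp
    ((𝕜 ∙ B.symm ψ).starProjection_apply_mem (B.symm y))
  refine ⟨c, ?_⟩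
  rw [← Submodule.starProjection_apply, Submodule.starProjection_orthogonal_val, ← hc, map_sub,
    map_smul, B.apply_symm_apply, B.apply_symm_apply, sub_add_cancel]

theorem norm_le_norm_adjoint_mul_norm_orthogonalProjectionOnto_symm [CompleteSpace 𝓗] {v : 𝓗}
    (hv : ⟪v, ψ⟫_𝕜 = 0) :
    ‖v‖ ≤ ‖adjoint (B : 𝓗 →L[𝕜] 𝓗)‖ *
      ‖(𝕜 ∙ B.symm ψ)ᗮ.orthogonalProjectionOnto (B.symm v)‖ := by
  set u := (𝕜 ∙ B.symm ψ)ᗮ.orthogonalProjectionOnto (B.symm v)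
  obtain ⟨c, hc⟩ := exists_eq_map_orthogonalProjectionOnto_symm_add_smul B ψ v
  have hvv : ⟪v, v⟫_𝕜 = ⟪adjoint (B : 𝓗 →L[𝕜] 𝓗) v, (u : 𝓗)⟫_𝕜 := by
    nth_rw 2 [hc]
    rw [inner_add_right, inner_smul_right, hv, mul_zero, add_zero, adjoint_inner_left]
    rfl
  have hsq : ‖v‖ * ‖v‖ ≤ ‖adjoint (B : 𝓗 →L[𝕜] 𝓗)‖ * ‖u‖ * ‖v‖ :=
    calc ‖v‖ * ‖v‖ = RCLike.re ⟪v, v⟫_𝕜 := (inner_self_eq_norm_mul_norm v).symm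
      _ ≤ ‖⟪adjoint (B : 𝓗 →L[𝕜] 𝓗) v, (u : 𝓗)⟫_𝕜‖ := hvv ▸ RCLike.re_le_norm _
      _ ≤ ‖adjoint (B : 𝓗 →L[𝕜] 𝓗) v‖ * ‖u‖ := norm_inner_le_norm _ _
      _ ≤ ‖adjoint (B : 𝓗 →L[𝕜] 𝓗)‖ * ‖v‖ * ‖u‖ := by gcongr; exact le_opNorm _ _
      _ = ‖adjoint (B : 𝓗 →L[𝕜] 𝓗)‖ * ‖u‖ * ‖v‖ := by ring
  rcases (norm_nonneg v).eq_or_lt with hv0 | hv0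
  · rw [← hv0]; positivity
  · exact le_of_mul_le_mul_right hsq hv0

theorem eq_zero_of_forall_inner_map_eq_zero_of_inner_eq_zero {w : 𝓗}
    (hW : ∀ φ ∈ (𝕜 ∙ B.symm ψ)ᗮ, ⟪B φ, w⟫_𝕜 = 0) (hψ : ⟪ψ, w⟫_𝕜 = 0) : w = 0 := by
  obtain ⟨c, hc⟩ := exists_eq_map_orthogonalProjectionOnto_symm_add_smul B ψ w
  rw [← inner_self_eq_zero (𝕜 := 𝕜)]
  nth_rw 1 [hc]
  rw [inner_add_left, inner_smul_left, hψ, mul_zero, add_zero]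
  exact hW _ (Submodule.coe_mem _)

noncomputable def compressedConj (K : 𝓗 →L[𝕜] 𝓗) : (𝕜 ∙ B.symm ψ)ᗮ →L[𝕜] (𝕜 ∙ B.symm ψ)ᗮ :=
  (𝕜 ∙ B.symm ψ)ᗮ.orthogonalProjectionOnto ∘L ((B.symm : 𝓗 →L[𝕜] 𝓗) ∘L
    (K ∘L ((B : 𝓗 →L[𝕜] 𝓗) ∘L (𝕜 ∙ B.symm ψ)ᗮ.subtypeL)))

theorem compressedConj_apply (K : 𝓗 →L[𝕜] 𝓗) (φ : (𝕜 ∙ B.symm ψ)ᗮ) :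
    compressedConj B ψ K φ = (𝕜 ∙ B.symm ψ)ᗮ.orthogonalProjectionOnto (B.symm (K (B φ))) :=
  rfl

variable [CompleteSpace 𝓗] {B ψ} {K : 𝓗 →L[𝕜] 𝓗}

theorem IsSelfAdjoint.inner_map_eq_zero_of_map_eq_zero (hK : IsSelfAdjoint K) (hKψ : K ψ = 0)
    (x : 𝓗) : ⟪K x, ψ⟫_𝕜 = 0 := by
  rw [← adjoint_inner_right, hK.adjoint_eq, hKψ, inner_zero_right]

theorem mul_norm_le_mul_norm_compressedConj (hK : IsSelfAdjoint K) (hKψ : K ψ = 0) {Λ : ℝ}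
    (hΛ : 0 ≤ Λ) (hgap : ∀ φ : 𝓗, ⟪ψ, φ⟫_𝕜 = 0 → Λ * ‖φ‖ ≤ ‖K φ‖)
    (φ : (𝕜 ∙ B.symm ψ)ᗮ) :
    Λ * ‖φ‖ ≤ ‖adjoint (B : 𝓗 →L[𝕜] 𝓗)‖ *
      ‖(𝕜 ∙ B.symm ψ)ᗮ.orthogonalProjectionOnto ∘L (B.symm : 𝓗 →L[𝕜] 𝓗)‖ *
        ‖compressedConj B ψ K φ‖ := by
  set P := (𝕜 ∙ B.symm ψ)ᗮ.orthogonalProjectionOnto ∘L (B.symm : 𝓗 →L[𝕜] 𝓗)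
  set w := (𝕜 ∙ ψ)ᗮ.starProjection (B φ)
  have hφ : P w = φ := by
    rw [map_starProjection_orthogonal_singleton P
      (Submodule.orthogonalProjectionOnto_orthogonalComplement_singleton_eq_zero _)]
    simp [P]
  have hKw : K w = K (B φ) := map_starProjection_orthogonal_singleton K hKψ _
  have hwψ : ⟪ψ, w⟫_𝕜 = 0 :=
    Submodule.mem_orthogonal_singleton_iff_inner_right.mp (Submodule.starProjection_apply_mem _ _)
  calc Λ * ‖φ‖ ≤ Λ * (‖P‖ * ‖w‖) := by gcongr; exact hφ ▸ P.le_opNorm w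
    _ = ‖P‖ * (Λ * ‖w‖) := by ring
    _ ≤ ‖P‖ * ‖K (B φ)‖ := by gcongr; exact hKw ▸ hgap w hwψ
    _ ≤ ‖P‖ * (‖adjoint (B : 𝓗 →L[𝕜] 𝓗)‖ * ‖compressedConj B ψ K φ‖) := by
        gcongr
        exact norm_le_norm_adjoint_mul_norm_orthogonalProjectionOnto_symm B ψ
          (hK.inner_map_eq_zero_of_map_eq_zero hKψ _)
    _ = _ := by ring

theorem eq_zero_of_inner_compressedConj_eq_zero (hK : IsSelfAdjoint K) (hKψ : K ψ = 0)
    (hker : ∀ χ : 𝓗, ⟪ψ, χ⟫_𝕜 = 0 → K χ = 0 → χ = 0) {y : (𝕜 ∙ B.symm ψ)ᗮ}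
    (hy : ∀ φ, ⟪compressedConj B ψ K φ, y⟫_𝕜 = 0) : y = 0 := by
  set χ := adjoint (B.symm : 𝓗 →L[𝕜] 𝓗) y
  have hχ : ∀ x, ⟪B.symm x, (y : 𝓗)⟫_𝕜 = ⟪x, χ⟫_𝕜 := fun x ↦
    (adjoint_inner_right (B.symm : 𝓗 →L[𝕜] 𝓗) x y).symm
  have hKχ : K χ = 0 := by
    refine eq_zero_of_forall_inner_map_eq_zero_of_inner_eq_zero B ψ (fun φ hφ ↦ ?_) ?_
    · rw [← hK.adjoint_eq, adjoint_inner_right, ← hχ]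
      simpa [compressedConj_apply] using hy ⟨φ, hφ⟩
    · rw [← inner_conj_symm, hK.inner_map_eq_zero_of_map_eq_zero hKψ, map_zero]
  have hχψ : ⟪ψ, χ⟫_𝕜 = 0 := by
    rw [← hχ]
    exact Submodule.mem_orthogonal_singleton_iff_inner_right.mp y.2
  have hχ0 := hker χ hχψ hKχ
  rw [← Submodule.coe_eq_zero, ← inner_self_eq_zero (𝕜 := 𝕜)]
  nth_rw 1 [← B.symm_apply_apply (y : 𝓗)]
  rw [hχ, hχ0, inner_zero_right]

end

theorem cc_induced_operator_isomorphism_general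
    {𝓗 : Type*} [NormedAddCommGroup 𝓗] [InnerProductSpace ℂ 𝓗] [CompleteSpace 𝓗]
    (H : 𝓗 →L[ℂ] 𝓗) (hH : IsSelfAdjoint H) (E : ℝ)
    (B : 𝓗 ≃L[ℂ] 𝓗) (ψs : 𝓗)
    (heig : H ψs = (E : ℂ) • ψs)
    (Λ : ℝ) (hΛ : 0 < Λ)
    (hgap : ∀ φ : 𝓗, ⟪ψs, φ⟫_ℂ = 0 →
      Λ * ‖φ‖ ≤ ‖(H - (E : ℂ) • (1 : 𝓗 →L[ℂ] 𝓗)) φ‖) :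
    let ψ0 : 𝓗 := B.symm ψs
    let W : Submodule ℂ 𝓗 := (ℂ ∙ ψ0)ᗮ
    let Q : 𝓗 →L[ℂ] W := Submodule.orthogonalProjection W
    let A : W →L[ℂ] W :=
      Q ∘L ((B.symm : 𝓗 →L[ℂ] 𝓗) ∘L
        ((H - (E : ℂ) • (1 : 𝓗 →L[ℂ] 𝓗)) ∘L ((B : 𝓗 →L[ℂ] 𝓗) ∘L W.subtypeL)))
    Function.Bijective A ∧
      (∀ φ : W,
        Λ * ‖φ‖ ≤
          ‖ContinuousLinearMap.adjoint (B : 𝓗 →L[ℂ] 𝓗)‖ *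
            ‖Q ∘L (B.symm : 𝓗 →L[ℂ] 𝓗)‖ * ‖A φ‖) ∧
      ∃ e : W ≃L[ℂ] W, (∀ φ : W, e φ = A φ) ∧
        ‖(e.symm : W →L[ℂ] W)‖ ≤
          ‖ContinuousLinearMap.adjoint (B : 𝓗 →L[ℂ] 𝓗)‖ *
            ‖Q ∘L (B.symm : 𝓗 →L[ℂ] 𝓗)‖ / Λ := by
  intro ψ0 W Q A
  set K := H - (E : ℂ) • (1 : 𝓗 →L[ℂ] 𝓗)
  set Θ := ‖adjoint (B : 𝓗 →L[ℂ] 𝓗)‖ * ‖Q ∘L (B.symm : 𝓗 →L[ℂ] 𝓗)‖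
  have hK : IsSelfAdjoint K :=
    hH.sub (IsSelfAdjoint.smul (Complex.conj_ofReal E) (IsSelfAdjoint.one (𝓗 →L[ℂ] 𝓗)))
  have hKψ : K ψs = 0 := by simp [K, heig]
  have hlower : ∀ φ, Λ * ‖φ‖ ≤ Θ * ‖A φ‖ :=
    mul_norm_le_mul_norm_compressedConj hK hKψ hΛ.le hgap
  have hbound : ∀ φ, ‖φ‖ ≤ Θ / Λ * ‖A φ‖ := fun φ ↦ by
    rw [div_mul_eq_mul_div, le_div_iff₀ hΛ, mul_comm]
    exact hlower φ
  have hker : ∀ χ : 𝓗, ⟪ψs, χ⟫_ℂ = 0 → K χ = 0 → χ = 0 := fun χ hχ hKχ ↦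
    norm_le_zero_iff.mp <| nonpos_of_mul_nonpos_right (by simpa [hKχ] using hgap χ hχ) hΛ
  obtain ⟨e, he, he_symm⟩ :=
    exists_continuousLinearEquiv_of_bounded_below_of_orthogonal_range A (by positivity) hbound
      fun _ ↦ eq_zero_of_inner_compressedConj_eq_zero hK hKψ hker
  exact ⟨funext he ▸ e.bijective, hlower, e, he, he_symm⟩

/-- In a complex Hilbert space `𝓗`, with `H` bounded self-adjoint, `E ∈ ℝ`,
`B` a continuous linear automorphism with adjoint `B*`, `ψ* ≠ 0`, `ψ₀ := B⁻¹ψ*`,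
`W := {ψ₀}^⊥`, `Q` the orthogonal projection onto `W`, and `Aφ := Q(B⁻¹((H − E)(Bφ)))`:
assume `Hψ* = E·ψ*` and the spectral-gap condition `‖(H − E)φ‖ ≥ Λ‖φ‖` (with `Λ > 0`) for
every `φ ⊥ ψ*`.  Then `A : W → W` is bijective, `Λ·‖φ‖ ≤ ‖B*‖·‖Q∘B⁻¹‖·‖Aφ‖` for every
`φ ∈ W`, and `A` is a continuous linear isomorphism of `W` whose inverse has operator norm at
most `‖B*‖·‖Q∘B⁻¹‖/Λ`. -/
theorem cc_induced_operator_isomorphism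
    {𝓗 : Type*} [NormedAddCommGroup 𝓗] [InnerProductSpace ℂ 𝓗] [CompleteSpace 𝓗]
    (H : 𝓗 →L[ℂ] 𝓗) (hH : IsSelfAdjoint H) (E : ℝ)
    (B : 𝓗 ≃L[ℂ] 𝓗) (ψs : 𝓗) (hψs : ψs ≠ 0)
    (heig : H ψs = (E : ℂ) • ψs)
    (Λ : ℝ) (hΛ : 0 < Λ)
    (hgap : ∀ φ : 𝓗, ⟪ψs, φ⟫_ℂ = 0 →
      Λ * ‖φ‖ ≤ ‖(H - (E : ℂ) • (1 : 𝓗 →L[ℂ] 𝓗)) φ‖) :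
    let ψ0 : 𝓗 := B.symm ψs
    let W : Submodule ℂ 𝓗 := (ℂ ∙ ψ0)ᗮ
    let Q : 𝓗 →L[ℂ] W := Submodule.orthogonalProjection W
    let A : W →L[ℂ] W :=
      Q ∘L ((B.symm : 𝓗 →L[ℂ] 𝓗) ∘L
        ((H - (E : ℂ) • (1 : 𝓗 →L[ℂ] 𝓗)) ∘L ((B : 𝓗 →L[ℂ] 𝓗) ∘L W.subtypeL)))
    Function.Bijective A ∧
      (∀ φ : W,
        Λ * ‖φ‖ ≤
          ‖ContinuousLinearMap.adjoint (B : 𝓗 →L[ℂ] 𝓗)‖ *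
            ‖Q ∘L (B.symm : 𝓗 →L[ℂ] 𝓗)‖ * ‖A φ‖) ∧
      ∃ e : W ≃L[ℂ] W, (∀ φ : W, e φ = A φ) ∧
        ‖(e.symm : W →L[ℂ] W)‖ ≤
          ‖ContinuousLinearMap.adjoint (B : 𝓗 →L[ℂ] 𝓗)‖ *
            ‖Q ∘L (B.symm : 𝓗 →L[ℂ] 𝓗)‖ / Λ :=
  cc_induced_operator_isomorphism_general H hH E B ψs heig Λ hΛ hgap
end

section
/- Set R := min{δ, 1/(κL), 2α/L}. Then for every s in the open ball of radius R centred at t*: (1/(2α))·‖f(s)‖ ≤ ‖t* − s‖ ≤ 2κ·‖f(s)‖. Moreover, f is injective on this open ball; in particular t* is the unique zero of f in the open ball of radius R centred at t*. -/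
/-!
Taylor's formula with an `L`-Lipschitz derivative bounds the remainder
`‖f s - Df t* (s - t*)‖` by `L/2 ‖s - t*‖²`. On the ball of radius `R` this is at most
`α ‖s - t*‖` and at most `‖s - t*‖ / (2κ)`, so it is dominated by the linear part, which satisfies
`‖s - t*‖ / κ ≤ ‖Df t* (s - t*)‖ ≤ α ‖s - t*‖`; this gives both residual bounds. For
injectivity, the mean value inequality on a closed ball of radius `r < R` makes `f - Df t*`
`(L r)`-Lipschitz there, and `κ L r < 1` keeps it from cancelling the linear part.
-/

open Metric Set

section

variable {E F : Type*} [NormedAddCommGroup E] [NormedSpace ℝ E]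
  [NormedAddCommGroup F] [NormedSpace ℝ F] {f : E → F} {f' : E → E →L[ℝ] F} {L : ℝ}

theorem Convex.norm_image_sub_sub_fderiv_le {s : Set E} (hs : Convex ℝ s)
    (hf : ∀ z ∈ s, HasFDerivWithinAt f (f' z) s z) {x y : E} (hx : x ∈ s) (hy : y ∈ s)
    (hlip : ∀ z ∈ s, ‖f' z - f' x‖ ≤ L * ‖z - x‖) :
    ‖f y - f x - f' x (y - x)‖ ≤ L / 2 * ‖y - x‖ ^ 2 := by
  set ℓ : ℝ → E := ⇑(AffineMap.lineMap x y : ℝ →ᵃ[ℝ] E)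
  have hℓ : MapsTo ℓ (Icc 0 1) s := hs.mapsTo_lineMap hx hy
  have hℓx (t : ℝ) : ℓ t - x = t • (y - x) := AffineMap.lineMap_vsub_left x y t
  set g : ℝ → F := fun t => f (ℓ t) - f x - t • f' x (y - x)
  have hg : ∀ t ∈ Icc (0 : ℝ) 1,
      HasDerivWithinAt g (f' (ℓ t) (y - x) - f' x (y - x)) (Icc 0 1) t := fun t ht =>
    ((((hf _ (hℓ ht)).comp_hasDerivWithinAt t AffineMap.hasDerivWithinAt_lineMap hℓ).sub_const
      _).sub ((hasDerivWithinAt_id t _).smul_const _ |>.congr_deriv (one_smul ℝ _)))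
  have hB (t : ℝ) :
      HasDerivAt (fun t => L / 2 * ‖y - x‖ ^ 2 * t ^ 2) (L * ‖y - x‖ ^ 2 * t) t :=
    ((hasDerivAt_pow 2 t).const_mul _).congr_deriv (by norm_num; ring)
  have hbound : ∀ t ∈ Ico (0 : ℝ) 1,
      ‖f' (ℓ t) (y - x) - f' x (y - x)‖ ≤ L * ‖y - x‖ ^ 2 * t := by
    rintro t ⟨ht₀, ht₁⟩
    calc ‖f' (ℓ t) (y - x) - f' x (y - x)‖ ≤ ‖f' (ℓ t) - f' x‖ * ‖y - x‖ :=
          (f' (ℓ t) - f' x).le_opNorm (y - x)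
      _ ≤ L * ‖ℓ t - x‖ * ‖y - x‖ := by gcongr; exact hlip _ (hℓ ⟨ht₀, ht₁.le⟩)
      _ = L * ‖y - x‖ ^ 2 * t := by rw [hℓx, norm_smul, Real.norm_of_nonneg ht₀]; ring
  have := image_norm_le_of_norm_deriv_right_le_deriv_boundary
    (fun t ht => (hg t ht).continuousWithinAt)
    (fun t ht => (hg t (Ico_subset_Icc_self ht)).mono_of_mem_nhdsWithin
      (Icc_mem_nhdsGE_of_mem ht))
    (by simp [g, ℓ]) hB hbound (right_mem_Icc.2 zero_le_one)
  simpa [g, ℓ] using this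

theorem ContinuousLinearEquiv.norm_le_mul_norm_apply (e : E ≃L[ℝ] F) {κ : ℝ}
    (hκ : ‖(e.symm : F →L[ℝ] E)‖ ≤ κ) (x : E) : ‖x‖ ≤ κ * ‖e x‖ :=
  calc ‖x‖ = ‖(e.symm : F →L[ℝ] E) (e x)‖ := by simp
    _ ≤ ‖(e.symm : F →L[ℝ] E)‖ * ‖e x‖ := ContinuousLinearMap.le_opNorm _ _
    _ ≤ κ * ‖e x‖ := by gcongr

theorem injOn_closedBall_of_norm_fderiv_sub_le {c : E} {r κ : ℝ}
    (hf : ∀ z ∈ closedBall c r, HasFDerivWithinAt f (f' z) (closedBall c r) z)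
    (hlip : ∀ z ∈ closedBall c r, ‖f' z - f' c‖ ≤ L * ‖z - c‖) (hL : 0 ≤ L)
    (hκ : ∀ z, ‖z‖ ≤ κ * ‖f' c z‖) (hκ₀ : 0 ≤ κ) (hr : κ * (L * r) < 1) :
    InjOn f (closedBall c r) := by
  intro x hx y hy hxy
  have hmv : ‖f' c (y - x)‖ ≤ L * r * ‖y - x‖ := by
    have := (convex_closedBall c r).norm_image_sub_le_of_norm_hasFDerivWithin_le' hf
      (fun z hz => (hlip z hz).trans (mul_le_mul_of_nonneg_left (mem_closedBall_iff_norm.mp hz) hL))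
      hx hy
    rwa [hxy, sub_self, zero_sub, norm_neg] at this
  have hle : ‖y - x‖ ≤ κ * (L * r) * ‖y - x‖ :=
    calc ‖y - x‖ ≤ κ * ‖f' c (y - x)‖ := hκ _
      _ ≤ κ * (L * r * ‖y - x‖) := by gcongr
      _ = κ * (L * r) * ‖y - x‖ := by ring
  have : ‖y - x‖ = 0 := by nlinarith [norm_nonneg (y - x)]
  exact (sub_eq_zero.mp (norm_eq_zero.mp this)).symm

theorem injOn_ball_of_norm_fderiv_sub_le {c : E} {ρ κ : ℝ}
    (hf : ∀ z ∈ ball c ρ, HasFDerivWithinAt f (f' z) (ball c ρ) z)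
    (hlip : ∀ z ∈ ball c ρ, ‖f' z - f' c‖ ≤ L * ‖z - c‖) (hL : 0 < L)
    (hκ : ∀ z, ‖z‖ ≤ κ * ‖f' c z‖) (hκ₀ : 0 < κ) (hρ : κ * (L * ρ) ≤ 1) :
    InjOn f (ball c ρ) := by
  intro x hx y hy
  have hr : max (dist x c) (dist y c) < ρ := max_lt hx hy
  have hsub : closedBall c (max (dist x c) (dist y c)) ⊆ ball c ρ := closedBall_subset_ball hr
  refine injOn_closedBall_of_norm_fderiv_sub_le (fun z hz => (hf z (hsub hz)).mono hsub)
    (fun z hz => hlip z (hsub hz)) hL.le hκ hκ₀.le ?_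
    (mem_closedBall.mpr (le_max_left _ _)) (mem_closedBall.mpr (le_max_right _ _))
  calc κ * (L * max (dist x c) (dist y c)) < κ * (L * ρ) := by gcongr
    _ ≤ 1 := hρ

theorem norm_image_sub_fderiv_le_of_mem_ball {c x : E} {ρ : ℝ}
    (hf : ∀ z ∈ ball c ρ, HasFDerivWithinAt f (f' z) (ball c ρ) z)
    (hlip : ∀ z ∈ ball c ρ, ‖f' z - f' c‖ ≤ L * ‖z - c‖) (hc : f c = 0) (hx : x ∈ ball c ρ) :
    ‖f x - f' c (x - c)‖ ≤ L / 2 * ‖x - c‖ ^ 2 := by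
  simpa [hc] using (convex_ball c ρ).norm_image_sub_sub_fderiv_le hf
    (mem_ball_self (pos_of_mem_ball hx)) hx hlip

theorem norm_image_le_mul_norm_sub_of_mem_ball {c x : E} {ρ α : ℝ}
    (hf : ∀ z ∈ ball c ρ, HasFDerivWithinAt f (f' z) (ball c ρ) z)
    (hlip : ∀ z ∈ ball c ρ, ‖f' z - f' c‖ ≤ L * ‖z - c‖) (hL : 0 ≤ L) (hc : f c = 0)
    (hα : ‖f' c‖ ≤ α) (hρ : L * ρ ≤ 2 * α) (hx : x ∈ ball c ρ) :
    ‖f x‖ ≤ 2 * α * ‖x - c‖ := by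
  have hxc : L * ‖x - c‖ ≤ 2 * α := le_trans (by gcongr; exact mem_ball_iff_norm.mp hx |>.le) hρ
  calc ‖f x‖ ≤ ‖f' c (x - c)‖ + ‖f x - f' c (x - c)‖ := norm_le_norm_add_norm_sub' _ _
    _ ≤ α * ‖x - c‖ + L / 2 * ‖x - c‖ ^ 2 :=
      add_le_add ((f' c).le_of_opNorm_le hα _) (norm_image_sub_fderiv_le_of_mem_ball hf hlip hc hx)
    _ ≤ 2 * α * ‖x - c‖ := by nlinarith [norm_nonneg (x - c)]

theorem norm_sub_le_mul_norm_image_of_mem_ball {c x : E} {ρ κ : ℝ}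
    (hf : ∀ z ∈ ball c ρ, HasFDerivWithinAt f (f' z) (ball c ρ) z)
    (hlip : ∀ z ∈ ball c ρ, ‖f' z - f' c‖ ≤ L * ‖z - c‖) (hL : 0 ≤ L) (hc : f c = 0)
    (hκ : ∀ z, ‖z‖ ≤ κ * ‖f' c z‖) (hκ₀ : 0 ≤ κ) (hρ : κ * (L * ρ) ≤ 1) (hx : x ∈ ball c ρ) :
    ‖x - c‖ ≤ 2 * κ * ‖f x‖ := by
  have hxc : κ * (L * ‖x - c‖) ≤ 1 := le_trans (by gcongr; exact mem_ball_iff_norm.mp hx |>.le) hρ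
  have := calc ‖x - c‖ ≤ κ * ‖f' c (x - c)‖ := hκ _
    _ ≤ κ * (‖f x‖ + ‖f x - f' c (x - c)‖) := by gcongr; exact norm_le_norm_add_norm_sub _ _
    _ ≤ κ * (‖f x‖ + L / 2 * ‖x - c‖ ^ 2) := by
      gcongr; exact norm_image_sub_fderiv_le_of_mem_ball hf hlip hc hx
  nlinarith [norm_nonneg (x - c)]

end

theorem cc_local_wellposedness_general
    {X Y : Type*} [NormedAddCommGroup X] [NormedSpace ℝ X]
    [NormedAddCommGroup Y] [NormedSpace ℝ Y]
    (f : X → Y) (tstar : X) (hzero : f tstar = 0)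
    (δ : ℝ) (hδ : 0 < δ) (Df : X → (X →L[ℝ] Y))
    (hdiff : ∀ s ∈ Metric.closedBall tstar δ, HasFDerivAt f (Df s) s)
    (L : ℝ) (hL : 0 < L)
    (hlip : ∀ s₁ ∈ Metric.closedBall tstar δ, ∀ s₂ ∈ Metric.closedBall tstar δ,
      ‖Df s₁ - Df s₂‖ ≤ L * ‖s₁ - s₂‖)
    (e : X ≃L[ℝ] Y) (he : (e : X →L[ℝ] Y) = Df tstar)
    (α κ : ℝ) (hα : 0 < α) (hκ : 0 < κ)
    (hnorm : ‖Df tstar‖ ≤ α) (hinv : ‖(e.symm : Y →L[ℝ] X)‖ ≤ κ) :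
    ∀ s ∈ Metric.ball tstar (min δ (min (1 / (κ * L)) (2 * α / L))),
      ((1 / (2 * α)) * ‖f s‖ ≤ ‖tstar - s‖ ∧ ‖tstar - s‖ ≤ 2 * κ * ‖f s‖) ∧
      (∀ s' ∈ Metric.ball tstar (min δ (min (1 / (κ * L)) (2 * α / L))),
        f s = f s' → s = s') ∧
      (f s = 0 → s = tstar) := by
  set R := min δ (min (1 / (κ * L)) (2 * α / L))
  have hRδ : ball tstar R ⊆ closedBall tstar δ :=
    ball_subset_closedBall.trans (closedBall_subset_closedBall (min_le_left _ _))
  have hRκ : κ * (L * R) ≤ 1 := by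
    have : R ≤ 1 / (κ * L) := (min_le_right _ _).trans (min_le_left _ _)
    rw [le_div_iff₀ (by positivity)] at this
    linarith
  have hRα : L * R ≤ 2 * α :=
    (le_div_iff₀' hL).mp ((min_le_right _ _).trans (min_le_right _ _))
  have hf (z) (hz : z ∈ ball tstar R) : HasFDerivWithinAt f (Df z) (ball tstar R) z :=
    (hdiff z (hRδ hz)).hasFDerivWithinAt
  have hlip' (z) (hz : z ∈ ball tstar R) : ‖Df z - Df tstar‖ ≤ L * ‖z - tstar‖ :=
    hlip z (hRδ hz) tstar (mem_closedBall_self hδ.le)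
  have hκ' : ∀ z, ‖z‖ ≤ κ * ‖Df tstar z‖ := he ▸ e.norm_le_mul_norm_apply hinv
  have hinj := injOn_ball_of_norm_fderiv_sub_le hf hlip' hL hκ' hκ hRκ
  intro s hs
  refine ⟨⟨?_, ?_⟩, fun _ hs' => hinj hs hs',
    fun h => hinj hs (mem_ball_self (pos_of_mem_ball hs)) (h.trans hzero.symm)⟩
  · rw [one_div, inv_mul_le_iff₀ (by positivity), norm_sub_rev]
    exact norm_image_le_mul_norm_sub_of_mem_ball hf hlip' hL.le hzero hnorm hRα hs
  · rw [norm_sub_rev]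
    exact norm_sub_le_mul_norm_image_of_mem_ball hf hlip' hL.le hzero hκ' hκ.le hRκ hs

/-- Let `X`, `Y` be real Banach spaces, `f : X → Y`, and `t*` a zero of `f`.
Suppose `f` is Fréchet differentiable on the closed ball of radius `δ > 0` about `t*`, with
derivative `Df` that is `L`-Lipschitz there (`L > 0`), and `Df(t*)` is a continuous linear
bijection with continuous inverse, with `‖Df(t*)‖ ≤ α` and `‖Df(t*)⁻¹‖ ≤ κ` (`α, κ > 0`).
Set `R := min{δ, 1/(κL), 2α/L}`.  Then for every `s` in the open ball of radius `R` about
`t*` one has `(1/(2α))·‖f(s)‖ ≤ ‖t* − s‖ ≤ 2κ·‖f(s)‖`; moreover `f` is injective on this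
ball, so in particular `t*` is the unique zero of `f` there. -/
theorem cc_local_wellposedness
    {X Y : Type*} [NormedAddCommGroup X] [NormedSpace ℝ X] [CompleteSpace X]
    [NormedAddCommGroup Y] [NormedSpace ℝ Y] [CompleteSpace Y]
    (f : X → Y) (tstar : X) (hzero : f tstar = 0)
    (δ : ℝ) (hδ : 0 < δ) (Df : X → (X →L[ℝ] Y))
    (hdiff : ∀ s ∈ Metric.closedBall tstar δ, HasFDerivAt f (Df s) s)
    (L : ℝ) (hL : 0 < L)
    (hlip : ∀ s₁ ∈ Metric.closedBall tstar δ, ∀ s₂ ∈ Metric.closedBall tstar δ,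
      ‖Df s₁ - Df s₂‖ ≤ L * ‖s₁ - s₂‖)
    (e : X ≃L[ℝ] Y) (he : (e : X →L[ℝ] Y) = Df tstar)
    (α κ : ℝ) (hα : 0 < α) (hκ : 0 < κ)
    (hnorm : ‖Df tstar‖ ≤ α) (hinv : ‖(e.symm : Y →L[ℝ] X)‖ ≤ κ) :
    ∀ s ∈ Metric.ball tstar (min δ (min (1 / (κ * L)) (2 * α / L))),
      ((1 / (2 * α)) * ‖f s‖ ≤ ‖tstar - s‖ ∧ ‖tstar - s‖ ≤ 2 * κ * ‖f s‖) ∧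
      (∀ s' ∈ Metric.ball tstar (min δ (min (1 / (κ * L)) (2 * α / L))),
        f s = f s' → s = s') ∧
      (f s = 0 → s = tstar) :=
  cc_local_wellposedness_general f tstar hzero δ hδ Df hdiff L hL hlip e he α κ hα hκ hnorm hinv
end

section
/- Let X and Y be real Banach spaces, f : X → Y a map, s₀ ∈ X, and δ > 0 such that f is Fréchet differentiable at every point of the closed ball of radius δ centred at s₀, with derivative Df satisfying ‖Df(s₁) − Df(s₂)‖_{op} ≤ L·‖s₁ − s₂‖ on that ball, L > 0. Assume Df(s₀) is a continuous linear bijection with continuous inverse and ‖Df(s₀)⁻¹‖_{op} ≤ κ with κ > 0. If t* ∈ X satisfies f(t*) = 0 and ‖t* − s₀‖ ≤ min{δ, 1/(κL)}, then ‖t* − s₀‖ ≤ 2κ·‖f(s₀)‖. -/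
/-!
Write `v = t* - s₀`. A Lipschitz derivative gives the second-order Taylor bound
`‖f t* - f s₀ - Df(s₀) v‖ ≤ (L/2)‖v‖²`, so with `f t* = 0`,
`‖v‖ ≤ κ‖Df(s₀) v‖ ≤ κ‖f s₀‖ + (κL‖v‖/2)‖v‖`. Since `κL‖v‖ ≤ 1`, the quadratic term
is absorbed into the left-hand side: `‖v‖/2 ≤ κ‖f s₀‖`.
-/

open Set Metric

section

variable {E F : Type*} [NormedAddCommGroup E] [NormedSpace ℝ E]
  [NormedAddCommGroup F] [NormedSpace ℝ F]

theorem norm_image_sub_sub_fderiv_le_of_lipschitz {f : E → F} {Df : E → E →L[ℝ] F}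
    {x y : E} {L : ℝ} (hf : ∀ z ∈ segment ℝ x y, HasFDerivAt f (Df z) z)
    (hlip : ∀ z ∈ segment ℝ x y, ‖Df z - Df x‖ ≤ L * ‖z - x‖) :
    ‖f y - f x - Df x (y - x)‖ ≤ L / 2 * ‖y - x‖ ^ 2 := by
  set v := y - x
  have hseg : ∀ θ ∈ Icc (0 : ℝ) 1, x + θ • v ∈ segment ℝ x y := fun θ hθ => by
    rw [segment_eq_image']; exact ⟨θ, hθ, rfl⟩
  set g : ℝ → F := fun θ => f (x + θ • v) - f x - θ • Df x v
  have hg : ∀ θ ∈ Icc (0 : ℝ) 1, HasDerivAt g (Df (x + θ • v) v - Df x v) θ := fun θ hθ => by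
    have hpath : HasDerivAt (fun θ : ℝ => x + θ • v) v θ := by
      simpa using ((hasDerivAt_id θ).smul_const v).const_add x
    have hlin : HasDerivAt (fun θ : ℝ => θ • Df x v) (Df x v) θ := by
      simpa using (hasDerivAt_id θ).smul_const (Df x v)
    exact (((hf _ (hseg θ hθ)).comp_hasDerivAt θ hpath).sub_const (f x)).sub hlin
  have hg' : ∀ θ ∈ Icc (0 : ℝ) 1, ‖Df (x + θ • v) v - Df x v‖ ≤ L * ‖v‖ ^ 2 * θ :=
    fun θ hθ => calc
      ‖Df (x + θ • v) v - Df x v‖ ≤ ‖Df (x + θ • v) - Df x‖ * ‖v‖ :=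
        (Df (x + θ • v) - Df x).le_opNorm v
      _ ≤ L * ‖x + θ • v - x‖ * ‖v‖ := by gcongr; exact hlip _ (hseg θ hθ)
      _ = L * ‖v‖ ^ 2 * θ := by
        rw [add_sub_cancel_left, norm_smul, Real.norm_of_nonneg hθ.1]; ring
  have hB : ∀ θ : ℝ, HasDerivAt (fun θ : ℝ => L / 2 * ‖v‖ ^ 2 * θ ^ 2) (L * ‖v‖ ^ 2 * θ) θ :=
    fun θ => ((hasDerivAt_pow 2 θ).const_mul (L / 2 * ‖v‖ ^ 2)).congr_deriv (by norm_num; ring)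
  have h1 := image_norm_le_of_norm_deriv_right_le_deriv_boundary
    (fun θ hθ => (hg θ hθ).continuousAt.continuousWithinAt)
    (fun θ hθ => (hg θ (Ico_subset_Icc_self hθ)).hasDerivWithinAt)
    (by simp [g]) hB (fun θ hθ => hg' θ (Ico_subset_Icc_self hθ)) (right_mem_Icc.2 zero_le_one)
  simpa [g, v] using h1

theorem norm_sub_le_two_mul_of_taylor_bound {f : E → F} (A : E ≃L[ℝ] F) {x y : E} {κ L : ℝ}
    (hinv : ‖(A.symm : F →L[ℝ] E)‖ ≤ κ) (hy : f y = 0)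
    (htaylor : ‖f y - f x - A (y - x)‖ ≤ L / 2 * ‖y - x‖ ^ 2)
    (hsmall : κ * L * ‖y - x‖ ≤ 1) :
    ‖y - x‖ ≤ 2 * κ * ‖f x‖ := by
  set v := y - x
  have hAv : ‖A v‖ ≤ ‖f x‖ + L / 2 * ‖v‖ ^ 2 := calc
    ‖A v‖ = ‖-f x - (f y - f x - A v)‖ := by rw [hy, zero_sub, sub_sub_cancel]
    _ ≤ ‖f x‖ + ‖f y - f x - A v‖ := by simpa only [norm_neg] using norm_sub_le (-f x) _
    _ ≤ ‖f x‖ + L / 2 * ‖v‖ ^ 2 := by gcongr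
  have hκ : 0 ≤ κ := (norm_nonneg _).trans hinv
  have hv : ‖v‖ ≤ κ * ‖A v‖ := calc
    ‖v‖ = ‖(A.symm : F →L[ℝ] E) (A v)‖ := by simp
    _ ≤ κ * ‖A v‖ := (ContinuousLinearMap.le_opNorm _ _).trans (by gcongr)
  have habsorb : ‖v‖ ≤ κ * ‖f x‖ + ‖v‖ / 2 := calc
    ‖v‖ ≤ κ * (‖f x‖ + L / 2 * ‖v‖ ^ 2) := hv.trans (by gcongr)
    _ = κ * ‖f x‖ + κ * L * ‖v‖ * ‖v‖ / 2 := by ring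
    _ ≤ κ * ‖f x‖ + ‖v‖ / 2 := by nlinarith [norm_nonneg v]
  linarith

end

theorem cc_residual_error_estimate_general
    {X Y : Type*} [NormedAddCommGroup X] [NormedSpace ℝ X]
    [NormedAddCommGroup Y] [NormedSpace ℝ Y]
    (f : X → Y) (s₀ : X)
    (δ : ℝ) (Df : X → (X →L[ℝ] Y))
    (hdiff : ∀ s ∈ Metric.closedBall s₀ δ, HasFDerivAt f (Df s) s)
    (L : ℝ)
    (hlip : ∀ s₁ ∈ Metric.closedBall s₀ δ, ∀ s₂ ∈ Metric.closedBall s₀ δ,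
      ‖Df s₁ - Df s₂‖ ≤ L * ‖s₁ - s₂‖)
    (e : X ≃L[ℝ] Y) (he : (e : X →L[ℝ] Y) = Df s₀)
    (κ : ℝ) (hinv : ‖(e.symm : Y →L[ℝ] X)‖ ≤ κ)
    (tstar : X) (hzero : f tstar = 0)
    (hclose : ‖tstar - s₀‖ ≤ min δ (1 / (κ * L))) :
    ‖tstar - s₀‖ ≤ 2 * κ * ‖f s₀‖ := by
  have hδ : ‖tstar - s₀‖ ≤ δ := hclose.trans (min_le_left _ _)
  have hseg : segment ℝ s₀ tstar ⊆ closedBall s₀ δ :=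
    (convex_closedBall s₀ δ).segment_subset (mem_closedBall_self ((norm_nonneg _).trans hδ))
      (by rwa [mem_closedBall, dist_eq_norm])
  have htaylor := norm_image_sub_sub_fderiv_le_of_lipschitz (fun z hz => hdiff z (hseg hz))
    (fun z hz => hlip z (hseg hz) s₀ (hseg (left_mem_segment ℝ s₀ tstar)))
  rw [← he] at htaylor
  have hsmall : κ * L * ‖tstar - s₀‖ ≤ 1 := by
    rcases le_or_gt (κ * L) 0 with hκL | hκL
    · exact (mul_nonpos_of_nonpos_of_nonneg hκL (norm_nonneg _)).trans zero_le_one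
    · rw [mul_comm]
      exact mul_le_of_le_div₀ zero_le_one hκL.le (hclose.trans (min_le_right _ _))
  exact norm_sub_le_two_mul_of_taylor_bound e hinv hzero htaylor hsmall

/-- Let `X`, `Y` be real Banach spaces, `f : X → Y`, `s₀ ∈ X`, and `δ > 0`
such that `f` is Fréchet differentiable on the closed ball of radius `δ` about `s₀`, with
derivative `Df` that is `L`-Lipschitz there (`L > 0`).  Assume `Df(s₀)` is a continuous
linear bijection with continuous inverse and `‖Df(s₀)⁻¹‖ ≤ κ` with `κ > 0`.  If `t* ∈ X`
satisfies `f(t*) = 0` and `‖t* − s₀‖ ≤ min{δ, 1/(κL)}`, then `‖t* − s₀‖ ≤ 2κ·‖f(s₀)‖`. -/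
theorem cc_residual_error_estimate
    {X Y : Type*} [NormedAddCommGroup X] [NormedSpace ℝ X] [CompleteSpace X]
    [NormedAddCommGroup Y] [NormedSpace ℝ Y] [CompleteSpace Y]
    (f : X → Y) (s₀ : X)
    (δ : ℝ) (hδ : 0 < δ) (Df : X → (X →L[ℝ] Y))
    (hdiff : ∀ s ∈ Metric.closedBall s₀ δ, HasFDerivAt f (Df s) s)
    (L : ℝ) (hL : 0 < L)
    (hlip : ∀ s₁ ∈ Metric.closedBall s₀ δ, ∀ s₂ ∈ Metric.closedBall s₀ δ,
      ‖Df s₁ - Df s₂‖ ≤ L * ‖s₁ - s₂‖)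
    (e : X ≃L[ℝ] Y) (he : (e : X →L[ℝ] Y) = Df s₀)
    (κ : ℝ) (hκ : 0 < κ) (hinv : ‖(e.symm : Y →L[ℝ] X)‖ ≤ κ)
    (tstar : X) (hzero : f tstar = 0)
    (hclose : ‖tstar - s₀‖ ≤ min δ (1 / (κ * L))) :
    ‖tstar - s₀‖ ≤ 2 * κ * ‖f s₀‖ :=
  cc_residual_error_estimate_general f s₀ δ Df hdiff L hlip e he κ hinv tstar hzero hclose
end

section
/- Assume the uniform discrete inf-sup condition: there exist Υ > 0 and K₀ ∈ ℕ such that for all K ≥ K₀ and all w ∈ V_K, sup{⟨w, Df(t*)s⟩ : s ∈ V_K, ‖s‖ ≤ 1} ≥ Υ·‖w‖. Then there exist K₁ ∈ ℕ, δ₀ > 0 and C > 0 such that for every K ≥ K₁ the Galerkin problem associated with V_K has a unique solution t_K with ‖t_K − t*‖ ≤ δ₀, and this solution satisfies the quasi-optimal error bound ‖t_K − t*‖ ≤ C · inf{‖s − t*‖ : s ∈ V_K}. -/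
/-!
On `V_K` the Galerkin problem is the equation `P_K f(t) = 0`, with `P_K` the orthogonal
projection onto `V_K`. On the ball of radius `ρ` about `t*`, `f` differs from `A = Df(t*)` by a
map with Lipschitz constant `Lρ`, hence `P_K f` differs from the compression `P_K A` of `A` to
`V_K` by such a map as well. The inf-sup condition bounds the adjoint of this compression from
below by `Υ`; in finite dimension the compression itself is then invertible with inverse bounded
by `1/Υ`. Once `Lρ ≤ Υ/2`, the quantitative local surjectivity behind the inverse function
theorem gives a zero of `P_K f` within `(2 + 2‖A‖/Υ) dist(t*, V_K)` of `t*`, and the same lower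
bound makes `P_K f` injective on the ball. By density, `dist(t*, V_K)` is small for large `K`.
-/

open scoped RealInnerProductSpace NNReal
open Metric Set Function

section ApproximatesLinear

variable {E F : Type*} [NormedAddCommGroup E] [NormedSpace ℝ E]
  [NormedAddCommGroup F] [NormedSpace ℝ F]

theorem approximatesLinearOn_closedBall_of_lipschitz_fderiv {f : E → F} {Df : E → E →L[ℝ] F}
    {x : E} {δ ρ L : ℝ} {c : ℝ≥0} (hdiff : ∀ y ∈ closedBall x δ, HasFDerivAt f (Df y) y)
    (hlip : ∀ y ∈ closedBall x δ, ‖Df y - Df x‖ ≤ L * ‖y - x‖) (hL : 0 ≤ L) (hρδ : ρ ≤ δ)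
    (hc : L * ρ ≤ c) : ApproximatesLinearOn f (Df x) (closedBall x ρ) c := by
  have hsub : closedBall x ρ ⊆ closedBall x δ := closedBall_subset_closedBall hρδ
  refine fun y hy z hz ↦ (convex_closedBall x ρ).norm_image_sub_le_of_norm_hasFDerivWithin_le'
    (fun w hw ↦ (hdiff w (hsub hw)).hasFDerivWithinAt) (fun w hw ↦ ?_) hz hy
  calc ‖Df w - Df x‖ ≤ L * ‖w - x‖ := hlip w (hsub hw)
    _ ≤ L * ρ := by gcongr; exact mem_closedBall_iff_norm.mp hw
    _ ≤ c := hc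

namespace ApproximatesLinearOn

variable {f : E → F} {f' : E →L[ℝ] F} {s : Set E} {c : ℝ≥0} {Υ : ℝ}

theorem norm_apply_le_of_apply_eq_zero (hf : ApproximatesLinearOn f f' s c) {x y : E}
    (hx : x ∈ s) (hy : y ∈ s) (hfx : f x = 0) : ‖f y‖ ≤ (c + ‖f'‖) * ‖y - x‖ :=
  calc ‖f y‖ = ‖(f y - f x - f' (y - x)) + f' (y - x)‖ := by rw [hfx]; abel_nf
    _ ≤ c * ‖y - x‖ + ‖f'‖ * ‖y - x‖ :=
      norm_add_le_of_le (hf y hy x hx) (f'.le_opNorm _)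
    _ = (c + ‖f'‖) * ‖y - x‖ := by ring

theorem injOn_of_mul_norm_le (hf : ApproximatesLinearOn f f' s c)
    (hlow : ∀ v, Υ * ‖v‖ ≤ ‖f' v‖) (hc : c < Υ) : InjOn f s := by
  intro x hx y hy hxy
  have happrox := hf x hx y hy
  rw [hxy, sub_self, zero_sub, norm_neg] at happrox
  have h : Υ * ‖x - y‖ ≤ c * ‖x - y‖ := (hlow (x - y)).trans happrox
  have : ‖x - y‖ ≤ 0 := by nlinarith [norm_nonneg (x - y)]
  exact sub_eq_zero.mp (norm_le_zero_iff.mp this)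

theorem exists_mem_closedBall_eq_zero [CompleteSpace E] (hf : ApproximatesLinearOn f f' s c)
    (hsurj : Surjective f') (hlow : ∀ v, Υ * ‖v‖ ≤ ‖f' v‖) (hc : c < Υ) {b : E}
    (hb : closedBall b (‖f b‖ / (Υ - c)) ⊆ s) :
    ∃ x ∈ closedBall b (‖f b‖ / (Υ - c)), f x = 0 := by
  have hΥ : 0 < Υ := c.coe_nonneg.trans_lt hc
  let g : f'.NonlinearRightInverse :=
    { toFun := fun y ↦ (hsurj y).choose
      nnnorm := ⟨Υ⁻¹, by positivity⟩
      bound' := fun y ↦ by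
        show _ ≤ Υ⁻¹ * _
        rw [← div_eq_inv_mul, le_div_iff₀ hΥ, mul_comm]
        simpa only [(hsurj y).choose_spec] using hlow (hsurj y).choose
      right_inv' := fun y ↦ (hsurj y).choose_spec }
  have hsub : 0 < Υ - c := sub_pos.mpr hc
  refine hf.surjOn_closedBall_of_nonlinearRightInverse g (by positivity) hb ?_
  show 0 ∈ closedBall (f b) (((Υ⁻¹)⁻¹ - c) * _)
  rw [inv_inv, mul_div_cancel₀ _ hsub.ne', mem_closedBall, dist_zero_left]

end ApproximatesLinearOn

end ApproximatesLinear

section InfSup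

variable {E : Type*} [NormedAddCommGroup E] [InnerProductSpace ℝ E]

theorem sSup_inner_apply_le_norm_adjoint [CompleteSpace E] (B : E →L[ℝ] E) (w : E) :
    sSup {r : ℝ | ∃ s, ‖s‖ ≤ 1 ∧ r = ⟪w, B s⟫} ≤ ‖B.adjoint w‖ := by
  refine csSup_le ⟨0, 0, by simp, by simp⟩ ?_
  rintro r ⟨s, hs, rfl⟩
  calc ⟪w, B s⟫ = ⟪B.adjoint w, s⟫ := (B.adjoint_inner_left s w).symm
    _ ≤ ‖B.adjoint w‖ * ‖s‖ := real_inner_le_norm _ _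
    _ ≤ ‖B.adjoint w‖ := mul_le_of_le_one_right (norm_nonneg _) hs

theorem mul_norm_le_norm_apply_of_mul_norm_le_norm_adjoint [FiniteDimensional ℝ E]
    (B : E →L[ℝ] E) {Υ : ℝ} (hΥ : 0 < Υ) (h : ∀ w, Υ * ‖w‖ ≤ ‖B.adjoint w‖) (v : E) :
    Υ * ‖v‖ ≤ ‖B v‖ := by
  have hinj : Injective B.adjoint := by
    refine (injective_iff_map_eq_zero _).mpr fun w hw ↦ norm_le_zero_iff.mp ?_
    have := h w
    rw [hw, norm_zero] at this
    nlinarith [norm_nonneg w]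
  obtain ⟨u, rfl⟩ :=
    (LinearMap.injective_iff_surjective (f := (B.adjoint : E →ₗ[ℝ] E))).mp hinj v
  change Υ * ‖B.adjoint u‖ ≤ ‖B (B.adjoint u)‖
  have hsq : ‖B.adjoint u‖ * ‖B.adjoint u‖ ≤ ‖B.adjoint u‖ * (‖B (B.adjoint u)‖ / Υ) :=
    calc ‖B.adjoint u‖ * ‖B.adjoint u‖ = ⟪u, B (B.adjoint u)⟫ := by
          rw [← B.adjoint_inner_left, real_inner_self_eq_norm_mul_norm]
      _ ≤ ‖u‖ * ‖B (B.adjoint u)‖ := real_inner_le_norm _ _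
      _ ≤ ‖B.adjoint u‖ / Υ * ‖B (B.adjoint u)‖ := by
          gcongr; rw [le_div_iff₀ hΥ, mul_comm]; exact h u
      _ = ‖B.adjoint u‖ * (‖B (B.adjoint u)‖ / Υ) := by ring
  rcases (norm_nonneg (B.adjoint u)).eq_or_lt with h0 | hpos
  · rw [← h0, mul_zero]; exact norm_nonneg _
  · rw [mul_comm, ← le_div_iff₀ hΥ]; exact le_of_mul_le_mul_left hsq hpos

theorem surjective_of_mul_norm_le_norm_apply [FiniteDimensional ℝ E] (B : E →L[ℝ] E)
    {Υ : ℝ} (hΥ : 0 < Υ) (h : ∀ v, Υ * ‖v‖ ≤ ‖B v‖) : Surjective B := by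
  refine (LinearMap.injective_iff_surjective (f := (B : E →ₗ[ℝ] E))).mp ?_
  refine (injective_iff_map_eq_zero _).mpr fun v hv ↦ norm_le_zero_iff.mp ?_
  have := h v
  rw [ContinuousLinearMap.coe_coe] at hv
  rw [hv, norm_zero] at this
  nlinarith [norm_nonneg v]

end InfSup

namespace Submodule

variable {H : Type*} [NormedAddCommGroup H] [InnerProductSpace ℝ H] (U : Submodule ℝ H)
  [U.HasOrthogonalProjection]

noncomputable def galerkinMap (f : H → H) (t : U) : U := U.orthogonalProjectionOnto (f t)

noncomputable def compression (A : H →L[ℝ] H) : U →L[ℝ] U :=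
  U.orthogonalProjectionOnto ∘L A ∘L U.subtypeL

variable {U}

theorem galerkinMap_eq_zero_iff {f : H → H} {t : U} :
    U.galerkinMap f t = 0 ↔ ∀ s ∈ U, ⟪s, f t⟫ = 0 := by
  rw [galerkinMap, orthogonalProjectionOnto_eq_zero_iff, mem_orthogonal]

theorem inner_compression_apply (A : H →L[ℝ] H) (w s : U) :
    ⟪w, U.compression A s⟫ = ⟪(w : H), A s⟫ :=
  inner_orthogonalProjectionOnto_eq_of_mem_left w _

theorem norm_galerkinMap_le (f : H → H) (t : U) : ‖U.galerkinMap f t‖ ≤ ‖f t‖ :=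
  U.norm_orthogonalProjectionOnto_apply_le _

theorem _root_.ApproximatesLinearOn.galerkinMap {f : H → H} {A : H →L[ℝ] H} {s : Set H}
    {c : ℝ≥0} (hf : ApproximatesLinearOn f A s c) :
    ApproximatesLinearOn (U.galerkinMap f) (U.compression A) (U.subtype ⁻¹' s) c := by
  intro x hx y hy
  have key : U.galerkinMap f x - U.galerkinMap f y - U.compression A (x - y) =
      U.orthogonalProjectionOnto (f x - f y - A (x - y)) := by
    simp only [compression, ContinuousLinearMap.comp_apply, map_sub]
    rfl
  rw [key]
  exact (U.norm_orthogonalProjectionOnto_apply_le _).trans (hf x hx y hy)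

theorem mul_norm_le_norm_compression_apply [FiniteDimensional ℝ U] {A : H →L[ℝ] H} {Υ : ℝ}
    (hΥ : 0 < Υ)
    (hinfsup : ∀ w ∈ U, Υ * ‖w‖ ≤ sSup {r : ℝ | ∃ s ∈ U, ‖s‖ ≤ 1 ∧ r = ⟪w, A s⟫}) (v : U) :
    Υ * ‖v‖ ≤ ‖U.compression A v‖ := by
  refine mul_norm_le_norm_apply_of_mul_norm_le_norm_adjoint _ hΥ (fun w ↦ ?_) v
  have hsets : {r : ℝ | ∃ s ∈ U, ‖s‖ ≤ 1 ∧ r = ⟪(w : H), A s⟫} =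
      {r : ℝ | ∃ s : U, ‖s‖ ≤ 1 ∧ r = ⟪w, U.compression A s⟫} := by
    ext r
    constructor
    · rintro ⟨s, hs, hs1, rfl⟩
      exact ⟨⟨s, hs⟩, hs1, (inner_compression_apply A w ⟨s, hs⟩).symm⟩
    · rintro ⟨s, hs1, rfl⟩
      exact ⟨s, s.2, hs1, inner_compression_apply A w s⟩
  have := hinfsup w w.2
  rw [norm_coe, hsets] at this
  exact this.trans (sSup_inner_apply_le_norm_adjoint _ w)

theorem norm_sub_orthogonalProjectionOnto_le (x : H) {s : H} (hs : s ∈ U) :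
    ‖(U.orthogonalProjectionOnto x : H) - x‖ ≤ ‖s - x‖ := by
  rw [norm_sub_rev, norm_sub_rev s, ← starProjection_apply, starProjection_minimal]
  exact ciInf_le ⟨0, by rintro _ ⟨w, rfl⟩; exact norm_nonneg _⟩ (⟨s, hs⟩ : U)

theorem norm_sub_orthogonalProjectionOnto_le_sInf (x : H) :
    ‖(U.orthogonalProjectionOnto x : H) - x‖ ≤ sInf ((fun s ↦ ‖s - x‖) '' (U : Set H)) :=
  le_csInf ⟨_, Set.mem_image_of_mem _ U.zero_mem⟩ fun _ ⟨_, hs, h⟩ ↦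
    h ▸ norm_sub_orthogonalProjectionOnto_le x hs

theorem exists_galerkinMap_eq_zero [FiniteDimensional ℝ U] {f : H → H} {A : H →L[ℝ] H} {x : H}
    {ρ Υ : ℝ} {c : ℝ≥0} (hf : ApproximatesLinearOn f A (closedBall x ρ) c) (hfx : f x = 0)
    (hlow : ∀ v, Υ * ‖v‖ ≤ ‖U.compression A v‖) (hc : c < Υ)
    (hρ : (Υ + ‖A‖) / (Υ - c) * ‖(U.orthogonalProjectionOnto x : H) - x‖ ≤ ρ) :
    ∃ t : U, U.galerkinMap f t = 0 ∧
      ‖(t : H) - x‖ ≤ (Υ + ‖A‖) / (Υ - c) * ‖(U.orthogonalProjectionOnto x : H) - x‖ := by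
  set u := U.orthogonalProjectionOnto x
  set d := ‖(u : H) - x‖
  have hgap : 0 < Υ - c := sub_pos.mpr hc
  have hdρ : d ≤ ρ := by
    refine (le_mul_of_one_le_left (norm_nonneg _) ?_).trans hρ
    exact (one_le_div hgap).mpr (by linarith [norm_nonneg A, c.coe_nonneg])
  have hGu : ‖U.galerkinMap f u‖ ≤ (c + ‖A‖) * d := (U.norm_galerkinMap_le f u).trans
    (hf.norm_apply_le_of_apply_eq_zero (mem_closedBall_self (hdρ.trans' (norm_nonneg _)))
      (mem_closedBall_iff_norm.mpr hdρ) hfx)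
  have hnear : ∀ t ∈ closedBall u (‖U.galerkinMap f u‖ / (Υ - c)),
      ‖(t : H) - x‖ ≤ (Υ + ‖A‖) / (Υ - c) * d := fun t ht ↦
    calc ‖(t : H) - x‖ ≤ ‖(t : H) - u‖ + d := norm_sub_le_norm_sub_add_norm_sub _ _ _
      _ ≤ (c + ‖A‖) * d / (Υ - c) + d := by
        rw [← AddSubgroupClass.coe_sub, norm_coe]
        gcongr
        exact (mem_closedBall_iff_norm.mp ht).trans (by gcongr)
      _ = (Υ + ‖A‖) / (Υ - c) * d := by field_simp; ring
  obtain ⟨t, ht, hGt⟩ := hf.galerkinMap.exists_mem_closedBall_eq_zero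
    (surjective_of_mul_norm_le_norm_apply _ (c.coe_nonneg.trans_lt hc) hlow) hlow hc
    fun t ht ↦ mem_closedBall_iff_norm.mpr ((hnear t ht).trans hρ)
  exact ⟨t, hGt, hnear t ht⟩

end Submodule

theorem exists_forall_ge_exists_mem_norm_sub_lt {H : Type*} [NormedAddCommGroup H]
    [InnerProductSpace ℝ H] {V : ℕ → Submodule ℝ H} (hmono : Monotone V)
    (hdense : Dense (⋃ K, (V K : Set H))) (x : H) {ε : ℝ} (hε : 0 < ε) :
    ∃ J, ∀ K ≥ J, ∃ s ∈ V K, ‖s - x‖ < ε := by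
  obtain ⟨s, hs, hsV⟩ := Metric.dense_iff.mp hdense x ε hε
  obtain ⟨J, hJ⟩ := Set.mem_iUnion.mp hsV
  exact ⟨J, fun K hK ↦ ⟨s, hmono hK hJ, by rwa [← dist_eq_norm, ← mem_ball]⟩⟩

theorem cc_galerkin_quasi_optimality_general
    {𝓗 : Type*} [NormedAddCommGroup 𝓗] [InnerProductSpace ℝ 𝓗]
    (f : 𝓗 → 𝓗) (tstar : 𝓗) (hzero : f tstar = 0)
    (δ : ℝ) (hδ : 0 < δ) (Df : 𝓗 → (𝓗 →L[ℝ] 𝓗))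
    (hdiff : ∀ s ∈ Metric.closedBall tstar δ, HasFDerivAt f (Df s) s)
    (L : ℝ) (hL : 0 < L)
    (hlip : ∀ s₁ ∈ Metric.closedBall tstar δ, ∀ s₂ ∈ Metric.closedBall tstar δ,
      ‖Df s₁ - Df s₂‖ ≤ L * ‖s₁ - s₂‖)
    (V : ℕ → Submodule ℝ 𝓗) (hfd : ∀ K, FiniteDimensional ℝ (V K))
    (hmono : ∀ K, V K ≤ V (K + 1))
    (hdense : Dense (⋃ K, (V K : Set 𝓗)))
    (Υ : ℝ) (hΥ : 0 < Υ) (K₀ : ℕ)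
    (hinfsup : ∀ K, K₀ ≤ K → ∀ w ∈ V K,
      Υ * ‖w‖ ≤ sSup {r : ℝ | ∃ s ∈ V K, ‖s‖ ≤ 1 ∧ r = ⟪w, Df tstar s⟫}) :
    ∃ K₁ : ℕ, ∃ δ₀ > 0, ∃ C > 0, ∀ K, K₁ ≤ K →
      ∃ tK : 𝓗,
        (tK ∈ V K ∧ (∀ s ∈ V K, ⟪s, f tK⟫ = 0) ∧ ‖tK - tstar‖ ≤ δ₀) ∧
        (∀ t' : 𝓗, t' ∈ V K → (∀ s ∈ V K, ⟪s, f t'⟫ = 0) → ‖t' - tstar‖ ≤ δ₀ → t' = tK) ∧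
        ‖tK - tstar‖ ≤ C * sInf ((fun s : 𝓗 => ‖s - tstar‖) '' (V K : Set 𝓗)) := by
  set A := Df tstar
  set ρ := min δ (Υ / (2 * L))
  have hρ : 0 < ρ := lt_min hδ (by positivity)
  set c : ℝ≥0 := ⟨Υ / 2, by positivity⟩
  have hcΥ : (c : ℝ) < Υ := by change Υ / 2 < Υ; linarith
  set C := (Υ + ‖A‖) / (Υ - c)
  have hC : 0 < C := div_pos (by positivity) (sub_pos.mpr hcΥ)
  have hf : ApproximatesLinearOn f A (closedBall tstar ρ) c :=
    approximatesLinearOn_closedBall_of_lipschitz_fderiv hdiff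
      (fun y hy ↦ hlip y hy tstar (mem_closedBall_self hδ.le)) hL.le (min_le_left _ _) <|
      calc L * ρ ≤ L * (Υ / (2 * L)) := by gcongr; exact min_le_right _ _
        _ = c := by change _ = Υ / 2; field_simp
  obtain ⟨K₁, hK₁⟩ := exists_forall_ge_exists_mem_norm_sub_lt
    (monotone_nat_of_le_succ hmono) hdense tstar (div_pos hρ hC)
  refine ⟨max K₀ K₁, ρ, hρ, C, hC, fun K hK ↦ ?_⟩
  have := hfd K
  have hd : C * ‖((V K).orthogonalProjectionOnto tstar : 𝓗) - tstar‖ ≤ ρ := by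
    obtain ⟨s, hs, hsx⟩ := hK₁ K (le_of_max_le_right hK)
    rw [← le_div_iff₀' hC]
    exact ((V K).norm_sub_orthogonalProjectionOnto_le tstar hs).trans hsx.le
  have hlow := (V K).mul_norm_le_norm_compression_apply hΥ (hinfsup K (le_of_max_le_left hK))
  obtain ⟨t, hGt, htC⟩ := (V K).exists_galerkinMap_eq_zero hf hzero hlow hcΥ hd
  refine ⟨t, ⟨t.2, Submodule.galerkinMap_eq_zero_iff.mp hGt, htC.trans hd⟩,
    fun t' ht' hgal' hnear' ↦ ?_,
    htC.trans (by gcongr; exact (V K).norm_sub_orthogonalProjectionOnto_le_sInf tstar)⟩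
  refine congrArg Subtype.val (hf.galerkinMap.injOn_of_mul_norm_le hlow hcΥ (x₁ := ⟨t', ht'⟩)
    (mem_closedBall_iff_norm.mpr hnear') (mem_closedBall_iff_norm.mpr (htC.trans hd)) ?_)
  rw [hGt, Submodule.galerkinMap_eq_zero_iff]
  exact hgal'

/-- Let `𝓗` be a real Hilbert space, `f : 𝓗 → 𝓗` a map with a zero `t*`,
Fréchet differentiable on a closed ball of radius `δ > 0` about `t*` with derivative `Df`
Lipschitz there with constant `L > 0`; let `(V_K)` be an increasing sequence of
finite-dimensional subspaces with dense union.  Assume the uniform discrete inf-sup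
condition: there are `Υ > 0` and `K₀` such that for all `K ≥ K₀` and all `w ∈ V_K`,
`sup{⟨w, Df(t*)s⟩ : s ∈ V_K, ‖s‖ ≤ 1} ≥ Υ·‖w‖`.  Then there exist `K₁`, `δ₀ > 0` and
`C > 0` such that for every `K ≥ K₁` the Galerkin problem for `V_K` (find `t ∈ V_K` with
`⟨s, f(t)⟩ = 0` for all `s ∈ V_K`) has a unique solution `t_K` with `‖t_K − t*‖ ≤ δ₀`,
and this solution satisfies `‖t_K − t*‖ ≤ C·inf{‖s − t*‖ : s ∈ V_K}`. -/
theorem cc_galerkin_quasi_optimality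
    {𝓗 : Type*} [NormedAddCommGroup 𝓗] [InnerProductSpace ℝ 𝓗] [CompleteSpace 𝓗]
    (f : 𝓗 → 𝓗) (tstar : 𝓗) (hzero : f tstar = 0)
    (δ : ℝ) (hδ : 0 < δ) (Df : 𝓗 → (𝓗 →L[ℝ] 𝓗))
    (hdiff : ∀ s ∈ Metric.closedBall tstar δ, HasFDerivAt f (Df s) s)
    (L : ℝ) (hL : 0 < L)
    (hlip : ∀ s₁ ∈ Metric.closedBall tstar δ, ∀ s₂ ∈ Metric.closedBall tstar δ,
      ‖Df s₁ - Df s₂‖ ≤ L * ‖s₁ - s₂‖)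
    (V : ℕ → Submodule ℝ 𝓗) (hfd : ∀ K, FiniteDimensional ℝ (V K))
    (hmono : ∀ K, V K ≤ V (K + 1))
    (hdense : Dense (⋃ K, (V K : Set 𝓗)))
    (Υ : ℝ) (hΥ : 0 < Υ) (K₀ : ℕ)
    (hinfsup : ∀ K, K₀ ≤ K → ∀ w ∈ V K,
      Υ * ‖w‖ ≤ sSup {r : ℝ | ∃ s ∈ V K, ‖s‖ ≤ 1 ∧ r = ⟪w, Df tstar s⟫}) :
    ∃ K₁ : ℕ, ∃ δ₀ > 0, ∃ C > 0, ∀ K, K₁ ≤ K →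
      ∃ tK : 𝓗,
        (tK ∈ V K ∧ (∀ s ∈ V K, ⟪s, f tK⟫ = 0) ∧ ‖tK - tstar‖ ≤ δ₀) ∧
        (∀ t' : 𝓗, t' ∈ V K → (∀ s ∈ V K, ⟪s, f t'⟫ = 0) → ‖t' - tstar‖ ≤ δ₀ → t' = tK) ∧
        ‖tK - tstar‖ ≤ C * sInf ((fun s : 𝓗 => ‖s - tstar‖) '' (V K : Set 𝓗)) :=
  cc_galerkin_quasi_optimality_general f tstar hzero δ hδ Df hdiff L hL hlip V hfd hmono hdense Υ hΥ
    K₀ hinfsup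
end
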